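/- For ω > 0, the Green's function Γ_ω(x,ξ) of the boundary value problem u'' − ω²u = f on (0,1), u(0)=u(1)=0, satisfies max_{(x,ξ)∈[0,1]²} |Γ_ω(x,ξ)| = (cosh ω − 1)/(2ω sinh ω), and this quantity is O(1/ω) as ω → ∞. -/
import Mathlib

open Real Set

/-- The Green's function for u'' − ω²u = f on (0,1) with Dirichlet conditions. -/
noncomputable def Green (ω x ξ : ℝ) : ℝ :=
  Real.sinh (ω * |x - ξ|) / (2 * ω) +
    (1 / (4 * ω * Real.sinh ω)) *
      ((Real.sinh (ω * ξ) * Real.exp (-ω) - Real.sinh (ω * (1 - ξ))) * Real.exp (ω * x) -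
       (Real.sinh (ω * ξ) * Real.exp ω - Real.sinh (ω * (1 - ξ))) * Real.exp (-(ω * x)))

lemma sinh_pos_of_pos (ω : ℝ) (hω : 0 < ω) : 0 < Real.sinh ω := by
  have : Real.sinh 0 < Real.sinh ω := Real.sinh_lt_sinh.mpr hω
  simpa using this

lemma sinh_nonneg_of_nonneg (t : ℝ) (ht : 0 ≤ t) : 0 ≤ Real.sinh t := by
  have : Real.sinh 0 ≤ Real.sinh t := Real.sinh_le_sinh.mpr ht
  simpa using this

lemma green_eq_le (ω : ℝ) (hω : 0 < ω) (x ξ : ℝ) (h : x ≤ ξ) :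
    Green ω x ξ = -(Real.sinh (ω*x) * Real.sinh (ω*(1-ξ))) / (ω * Real.sinh ω) := by
  have hs : Real.sinh ω ≠ 0 := ne_of_gt (sinh_pos_of_pos ω hω)
  have hω' : ω ≠ 0 := ne_of_gt hω
  unfold Green
  rw [abs_of_nonpos (by linarith), neg_sub]
  rw [show ω*(ξ-x) = (ω*ξ) - (ω*x) by ring, show ω*(1-ξ) = ω - ω*ξ by ring]
  rw [Real.sinh_sub, Real.sinh_sub]
  simp only [show ∀ t:ℝ, Real.exp t = Real.cosh t + Real.sinh t from
    fun t => (Real.cosh_add_sinh t).symm, Real.cosh_neg, Real.sinh_neg]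
  set s1 := Real.sinh (ω*x)
  set c1 := Real.cosh (ω*x)
  set s2 := Real.sinh (ω*ξ)
  set c2 := Real.cosh (ω*ξ)
  set s3 := Real.sinh ω
  set c3 := Real.cosh ω
  field_simp
  ring

lemma green_eq_ge (ω : ℝ) (hω : 0 < ω) (x ξ : ℝ) (h : ξ ≤ x) :
    Green ω x ξ = -(Real.sinh (ω*ξ) * Real.sinh (ω*(1-x))) / (ω * Real.sinh ω) := by
  have hs : Real.sinh ω ≠ 0 := ne_of_gt (sinh_pos_of_pos ω hω)
  have hω' : ω ≠ 0 := ne_of_gt hω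
  unfold Green
  rw [abs_of_nonneg (by linarith)]
  rw [show ω*(x-ξ) = (ω*x) - (ω*ξ) by ring, show ω*(1-ξ) = ω - ω*ξ by ring,
    show ω*(1-x) = ω - ω*x by ring]
  rw [Real.sinh_sub, Real.sinh_sub, Real.sinh_sub]
  simp only [show ∀ t:ℝ, Real.exp t = Real.cosh t + Real.sinh t from
    fun t => (Real.cosh_add_sinh t).symm, Real.cosh_neg, Real.sinh_neg]
  set s1 := Real.sinh (ω*x)
  set c1 := Real.cosh (ω*x)
  set s2 := Real.sinh (ω*ξ)
  set c2 := Real.cosh (ω*ξ)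
  set s3 := Real.sinh ω
  set c3 := Real.cosh ω
  field_simp
  ring

lemma prod_bound (ω a b : ℝ) (hω : 0 < ω) (ha : 0 ≤ a) (hab : a ≤ b) (hb : b ≤ 1) :
    Real.sinh (ω*a) * Real.sinh (ω*(1-b)) ≤ (Real.cosh ω - 1)/2 := by
  have key : Real.sinh (ω*a) * Real.sinh (ω*(1-b))
      = (Real.cosh (ω*a + ω*(1-b)) - Real.cosh (ω*a - ω*(1-b)))/2 := by
    rw [Real.cosh_add, Real.cosh_sub]; ring
  have h1 : Real.cosh (ω*a + ω*(1-b)) ≤ Real.cosh ω := by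
    rw [Real.cosh_le_cosh]
    rw [abs_of_nonneg (by nlinarith), abs_of_pos hω]
    nlinarith
  have h2 : 1 ≤ Real.cosh (ω*a - ω*(1-b)) := Real.one_le_cosh _
  linarith

/-- max |Γ_ω| over [0,1]² equals (cosh ω − 1)/(2ω sinh ω), attained at (1/2,1/2),
and this quantity is O(1/ω) as ω → ∞. -/
theorem green_function_max :
    (∀ ω : ℝ, 0 < ω →
      (∀ x ∈ Set.Icc (0:ℝ) 1, ∀ ξ ∈ Set.Icc (0:ℝ) 1,
        |Green ω x ξ| ≤ (Real.cosh ω - 1) / (2 * ω * Real.sinh ω)) ∧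
      |Green ω (1/2) (1/2)| = (Real.cosh ω - 1) / (2 * ω * Real.sinh ω)) ∧
    ∃ C : ℝ, 0 < C ∧ ∀ ω : ℝ, 1 ≤ ω →
      (Real.cosh ω - 1) / (2 * ω * Real.sinh ω) ≤ C / ω := by
  constructor
  · intro ω hω
    have hs : 0 < Real.sinh ω := sinh_pos_of_pos ω hω
    constructor
    · intro x hx ξ hξ
      obtain ⟨hx0, hx1⟩ := hx
      obtain ⟨hξ0, hξ1⟩ := hξ
      rcases le_total x ξ with h | h
      · rw [green_eq_le ω hω x ξ h]
        have hp : 0 ≤ Real.sinh (ω*x) * Real.sinh (ω*(1-ξ)) :=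
          mul_nonneg (sinh_nonneg_of_nonneg _ (by positivity))
            (sinh_nonneg_of_nonneg _ (by nlinarith))
        rw [abs_div, abs_neg, abs_of_nonneg hp, abs_of_pos (by positivity)]
        rw [div_le_div_iff₀ (by positivity) (by positivity)]
        have := prod_bound ω x ξ hω hx0 h hξ1
        nlinarith [mul_pos hω hs]
      · rw [green_eq_ge ω hω x ξ h]
        have hp : 0 ≤ Real.sinh (ω*ξ) * Real.sinh (ω*(1-x)) :=
          mul_nonneg (sinh_nonneg_of_nonneg _ (by positivity))
            (sinh_nonneg_of_nonneg _ (by nlinarith))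
        rw [abs_div, abs_neg, abs_of_nonneg hp, abs_of_pos (by positivity)]
        rw [div_le_div_iff₀ (by positivity) (by positivity)]
        have := prod_bound ω ξ x hω hξ0 h hx1
        nlinarith [mul_pos hω hs]
    · rw [green_eq_le ω hω (1/2) (1/2) le_rfl]
      have e1 : ω * (1 - (1:ℝ)/2) = ω/2 := by ring
      have e2 : ω * ((1:ℝ)/2) = ω/2 := by ring
      rw [e1, e2]
      have hc : Real.cosh ω = 2 * Real.sinh (ω/2)^2 + 1 := by
        have h1 := Real.cosh_two_mul (ω/2)
        have h2 := Real.cosh_sq (ω/2)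
        rw [show 2*(ω/2) = ω by ring] at h1
        rw [h1, h2]; ring
      have hp : 0 ≤ Real.sinh (ω/2) := sinh_nonneg_of_nonneg _ (by positivity)
      rw [abs_div, abs_neg, abs_of_nonneg (by nlinarith), abs_of_pos (by positivity), hc]
      have hω' : ω ≠ 0 := ne_of_gt hω
      have hs' : Real.sinh ω ≠ 0 := ne_of_gt hs
      field_simp
      ring
  · refine ⟨1, one_pos, fun ω hω => ?_⟩
    have hω0 : 0 < ω := by linarith
    have hs : 0 < Real.sinh ω := sinh_pos_of_pos ω hω0
    have hcs : Real.cosh ω - Real.sinh ω = Real.exp (-ω) := Real.cosh_sub_sinh ω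
    have he : Real.exp (-ω) ≤ 1 := by
      rw [Real.exp_le_one_iff]; linarith
    rw [div_le_div_iff₀ (by positivity) hω0]
    nlinarith
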